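/- There exists an absolute constant c ≥ 1 with the following property: for all M₁, M₂ > 0, all nonempty function classes F₁ ⊆ [−M₁,M₁]^X and F₂ ⊆ [−M₂,M₂]^X, every probability distribution μ over X, and every ε > 0, it holds that log N_{μ,F₂}(F₁, ε) ≤ c · (M₁M₂/ε)² · ( 1 + log N_{μ,F₁}(F₂, ε/8) ). -/

import Mathlib

/-!
Fix a minimal `ε/8`-cover `G` of `F₂` for `‖·‖_{μ,F₁}`, of size `N`. After `f ↦ √μ · f` the
pairing `inn μ` is the inner product of `ℓ²(X)`, and two points of `F₁` that are `ε`-apart for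
`‖·‖_{μ,F₂}` are already `3ε/4`-apart for one of the `N` functionals `⟪·, g⟫`, `g ∈ G`.
Such a packing is bounded by a Gaussian volume argument: the slab where all `N` functionals are at
most `s = M₂ √(2 log 4N)` carries at least half of the Gaussian mass, its translates by `λ f` with
`λ = 2s / (3ε/4)` are pairwise disjoint, and a translate by `θ` keeps at least `exp (-‖θ‖²/2)`
of the mass of a symmetric set. So a maximal `ε`-separated subset of `F₁`, which is an `ε`-cover,
has at most `2 (4N)^{(64/9)(M₁M₂/ε)²}` points.
-/

open scoped ENNReal Pointwise

noncomputable section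

namespace OI

/-- Expectation of a real-valued function under a probability mass function. -/
def pexp {α : Type*} (q : PMF α) (f : α → ℝ) : ℝ := ∑' a, (q a).toReal * f a

/-- Inner product of two functions w.r.t. the distribution `μ`. -/
def inn {X : Type*} (μ : PMF X) (f g : X → ℝ) : ℝ := pexp μ fun x => f x * g x

/-- Dual Minkowski (semi)norm of `f` w.r.t. the class `F`. -/
def dnorm {X : Type*} (μ : PMF X) (F : Set (X → ℝ)) (f : X → ℝ) : ℝ :=
  sSup ((fun g => |inn μ f g|) '' F)

/-- `C` is an ε-covering of `G` w.r.t. the seminorm defined by `F`. -/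
def IsCover {X : Type*} (μ : PMF X) (F G : Set (X → ℝ)) (ε : ℝ) (C : Set (X → ℝ)) : Prop :=
  C ⊆ G ∧ ∀ g ∈ G, ∃ c ∈ C, dnorm μ F (g - c) ≤ ε

/-- Covering number `N_{μ,F}(G, ε)` (`⊤` if no finite covering exists). -/
def covN {X : Type*} (μ : PMF X) (F G : Set (X → ℝ)) (ε : ℝ) : ℕ∞ :=
  ⨅ (C : Set (X → ℝ)) (_ : IsCover μ F G ε C), C.encard

/-- Base-2 logarithm of an extended natural number (junk value on `⊤`). -/
def elog2 (N : ℕ∞) : ℝ := Real.logb 2 (N.toNat : ℝ)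

/-- Bernoulli distribution on `Bool` with mean (the truncation to `[0,1]` of) `r`. -/
def bern (r : ℝ) : PMF Bool := PMF.bernoulli (min (Real.toNNReal r) 1) (min_le_right _ _)

/-- The distribution `μ_p` of individual-outcome pairs. -/
def exDist {X : Type*} (μ : PMF X) (p : X → ℝ) : PMF (X × Bool) :=
  μ.bind fun x => (bern (p x)).map fun o => (x, o)

/-- `n` i.i.d. samples from `q`. -/
def iid {α : Type*} (q : PMF α) : (n : ℕ) → PMF (Fin n → α)
  | 0 => PMF.pure Fin.elim0
  | n + 1 => (iid q n).bind fun v => q.map fun a => Fin.cons a v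

/-- Probability of an event under a PMF. -/
def prob {α : Type*} (q : PMF α) (E : Set α) : ℝ≥0∞ := q.toOuterMeasure E

/-- A (possibly randomized) `n`-sample learner. -/
abbrev Learner (X : Type*) (n : ℕ) := (Fin n → X × Bool) → PMF (X → ℝ)

/-- Distribution of the learner output on `n` i.i.d. samples from `μ_{p*}`. -/
def outDist {X : Type*} (μ : PMF X) (pstar : X → ℝ) {n : ℕ} (A : Learner X n) :
    PMF (X → ℝ) :=
  (iid (exDist μ pstar) n).bind A

/-- `p` is a predictor, i.e. takes values in `[0,1]`. -/
def Predictor {X : Type*} (p : X → ℝ) : Prop := ∀ x, p x ∈ Set.Icc (0 : ℝ) 1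

/-- `d` takes values in `[-1,1]`. -/
def Dist1 {X : Type*} (d : X → ℝ) : Prop := ∀ x, d x ∈ Set.Icc (-1 : ℝ) 1

/-- The class `[0,1]^X` of all predictors. -/
def allPred (X : Type*) : Set (X → ℝ) := {p | Predictor p}

/-- The learner `A` succeeds for target `pstar`: with probability at least `1 - δ` it outputs
a predictor whose maximum distinguishing advantage w.r.t. `pstar` over `D` is at most `ε`. -/
def Achieves {X : Type*} (μ : PMF X) (D : Set (X → ℝ)) (ε δ : ℝ) (pstar : X → ℝ) {n : ℕ}
    (A : Learner X n) : Prop :=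
  ENNReal.ofReal (1 - δ) ≤
    prob (outDist μ pstar A) {p | Predictor p ∧ dnorm μ D (p - pstar) ≤ ε}

/-- The agnostic benchmark `inf_{p' ∈ P} ‖p' - pstar‖_{μ,D}`. -/
def agTarget {X : Type*} (μ : PMF X) (P D : Set (X → ℝ)) (pstar : X → ℝ) : ℝ :=
  sInf ((fun p' => dnorm μ D (p' - pstar)) '' P)

/-- The learner `A` succeeds agnostically for target `pstar`. -/
def AchievesAg {X : Type*} (μ : PMF X) (P D : Set (X → ℝ)) (ε δ : ℝ) (pstar : X → ℝ) {n : ℕ}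
    (A : Learner X n) : Prop :=
  ENNReal.ofReal (1 - δ) ≤
    prob (outDist μ pstar A)
      {p | Predictor p ∧ dnorm μ D (p - pstar) ≤ agTarget μ P D pstar + ε}

/-- Distribution-specific realizable OI learner. -/
def DSRL {X : Type*} (μ : PMF X) (P D : Set (X → ℝ)) (ε δ : ℝ) (n : ℕ)
    (A : Learner X n) : Prop :=
  ∀ pstar ∈ P, Achieves μ D ε δ pstar A

/-- Distribution-specific agnostic OI learner. -/
def DSAL {X : Type*} (μ : PMF X) (P D : Set (X → ℝ)) (ε δ : ℝ) (n : ℕ)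
    (A : Learner X n) : Prop :=
  ∀ pstar : X → ℝ, Predictor pstar → AchievesAg μ P D ε δ pstar A

/-- Distribution-free realizable OI learner. -/
def DFRL {X : Type*} (P D : Set (X → ℝ)) (ε δ : ℝ) (n : ℕ) (A : Learner X n) : Prop :=
  ∀ μ : PMF X, DSRL μ P D ε δ n A

/-- Distribution-free agnostic OI learner. -/
def DFAL {X : Type*} (P D : Set (X → ℝ)) (ε δ : ℝ) (n : ℕ) (A : Learner X n) : Prop :=
  ∀ μ : PMF X, DSAL μ P D ε δ n A

/-- Sample complexity of distribution-specific realizable OI. -/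
def SAMPDSR {X : Type*} (μ : PMF X) (P D : Set (X → ℝ)) (ε δ : ℝ) : ℕ∞ :=
  ⨅ (n : ℕ) (_ : ∃ A : Learner X n, DSRL μ P D ε δ n A), (n : ℕ∞)

/-- Sample complexity of distribution-specific agnostic OI. -/
def SAMPDSA {X : Type*} (μ : PMF X) (P D : Set (X → ℝ)) (ε δ : ℝ) : ℕ∞ :=
  ⨅ (n : ℕ) (_ : ∃ A : Learner X n, DSAL μ P D ε δ n A), (n : ℕ∞)

/-- Sample complexity of distribution-free realizable OI. -/
def SAMPDFR {X : Type*} (P D : Set (X → ℝ)) (ε δ : ℝ) : ℕ∞ :=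
  ⨅ (n : ℕ) (_ : ∃ A : Learner X n, DFRL P D ε δ n A), (n : ℕ∞)

/-- Sample complexity of distribution-free agnostic OI. -/
def SAMPDFA {X : Type*} (P D : Set (X → ℝ)) (ε δ : ℝ) : ℕ∞ :=
  ⨅ (n : ℕ) (_ : ∃ A : Learner X n, DFAL P D ε δ n A), (n : ℕ∞)

/-- The points `x 0, …, x (n-1)` are `γ`-fat shattered by `F`. -/
def Shatters {X : Type*} (F : Set (X → ℝ)) (γ : ℝ) {n : ℕ} (x : Fin n → X) : Prop :=
  ∃ r : Fin n → ℝ, ∀ b : Fin n → Bool, ∃ f ∈ F,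
    ∀ i, γ ≤ (if b i then (1 : ℝ) else -1) * (f (x i) - r i)

/-- The `γ`-fat-shattering dimension of `F`. -/
def fatDim {X : Type*} (F : Set (X → ℝ)) (γ : ℝ) : ℕ∞ :=
  ⨆ (n : ℕ) (_ : ∃ x : Fin n → X, Shatters F γ x), (n : ℕ∞)

end OI


open OI

open MeasureTheory Real
open scoped RealInnerProductSpace

namespace OI

section Gaussian

def gaussDensity {E : Type*} [NormedAddCommGroup E] (x : E) : ℝ≥0∞ :=
  ENNReal.ofReal (exp (-‖x‖ ^ 2 / 2))

@[fun_prop]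
lemma measurable_gaussDensity {E : Type*} [NormedAddCommGroup E] [MeasurableSpace E]
    [BorelSpace E] : Measurable (gaussDensity : E → ℝ≥0∞) := by
  unfold gaussDensity; fun_prop

variable {E : Type*} [NormedAddCommGroup E] [InnerProductSpace ℝ E]

lemma gaussDensity_add (x θ : E) :
    gaussDensity (x + θ) =
      ENNReal.ofReal (exp (-‖θ‖ ^ 2 / 2)) * ENNReal.ofReal (exp (-⟪x, θ⟫)) * gaussDensity x := by
  simp only [gaussDensity, ← ENNReal.ofReal_mul (exp_nonneg _), ← exp_add, norm_add_sq_real]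
  ring_nf

def slab {J : Type*} (ρ : J → E) (s : ℝ) : Set E := {x | ∀ j, |⟪x, ρ j⟫| ≤ s}

lemma disjoint_preimage_sub_slab {J : Type*} (ρ : J → E) {s : ℝ} {a b : E}
    (h : ∃ j, 2 * s < |⟪a - b, ρ j⟫|) :
    Disjoint ((· - a) ⁻¹' slab ρ s) ((· - b) ⁻¹' slab ρ s) := by
  refine Set.disjoint_left.2 fun z hza hzb => ?_
  obtain ⟨j, hj⟩ := h
  have h_eq : ⟪a - b, ρ j⟫ = ⟪z - b, ρ j⟫ - ⟪z - a, ρ j⟫ := by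
    simp only [inner_sub_left]; ring
  rw [h_eq] at hj
  linarith [abs_sub ⟪z - b, ρ j⟫ ⟪z - a, ρ j⟫, hza j, hzb j]

variable [MeasurableSpace E] [BorelSpace E] [FiniteDimensional ℝ E]

-- Not normalised: only ratios of Gaussian masses matter below.
def gaussMeasure : Measure E := volume.withDensity gaussDensity

instance : IsFiniteMeasure (gaussMeasure : Measure E) := by
  refine isFiniteMeasure_withDensity_ofReal (Integrable.of_integral_ne_zero ?_).hasFiniteIntegral
  have := GaussianFourier.integral_rexp_neg_mul_sq_norm (V := E) (b := 1 / 2) (by norm_num)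
  simp only [neg_mul, one_div, inv_mul_eq_div] at this
  simp only [neg_div]
  rw [this]
  positivity

lemma gaussMeasure_univ_ne_zero : (gaussMeasure : Measure E) Set.univ ≠ 0 := by
  rw [gaussMeasure, Ne, withDensity_apply_eq_zero' measurable_gaussDensity.aemeasurable]
  simp [gaussDensity, exp_pos, NeZero.ne]

instance : (gaussMeasure : Measure E).IsNegInvariant := by
  refine ⟨Measure.ext fun A hA => ?_⟩
  rw [Measure.neg, Measure.map_apply measurable_neg hA, gaussMeasure,
    withDensity_apply _ (measurable_neg hA), withDensity_apply _ hA,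
    ← lintegral_indicator (measurable_neg hA), ← lintegral_indicator hA,
    ← lintegral_neg_eq_self]
  congr 1 with x
  by_cases hx : x ∈ A <;> simp [Set.indicator, hx, gaussDensity]

-- Cameron–Martin formula for the translate `S + θ`.
lemma gaussMeasure_preimage_sub {S : Set E} (hS : MeasurableSet S) (θ : E) :
    gaussMeasure ((· - θ) ⁻¹' S) =
      ENNReal.ofReal (exp (-‖θ‖ ^ 2 / 2)) *
        ∫⁻ x in S, ENNReal.ofReal (exp (-⟪x, θ⟫)) ∂gaussMeasure := by
  have hS' : MeasurableSet ((· - θ) ⁻¹' S) := hS.preimage (measurable_sub_const θ)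
  rw [gaussMeasure, withDensity_apply _ hS',
    setLIntegral_withDensity_eq_setLIntegral_mul _ measurable_gaussDensity (by fun_prop) hS,
    ← lintegral_indicator hS', ← lintegral_add_right_eq_self _ θ, ← lintegral_indicator hS,
    ← lintegral_const_mul _ ((by fun_prop : Measurable _).indicator hS)]
  congr 1 with x
  by_cases hx : x ∈ S <;> simp [Set.indicator, hx, gaussDensity_add]
  ring

-- Average the Cameron–Martin formulas for `S + θ` and `S - θ = -(S + θ)`, and use `cosh ≥ 1`.
lemma exp_mul_gaussMeasure_real_le_preimage_sub {S : Set E} (hS : MeasurableSet S)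
    (hS_neg : ∀ x ∈ S, -x ∈ S) (θ : E) :
    exp (-‖θ‖ ^ 2 / 2) * gaussMeasure.real S ≤ gaussMeasure.real ((· - θ) ⁻¹' S) := by
  set c := ENNReal.ofReal (exp (-‖θ‖ ^ 2 / 2))
  have h_neg : gaussMeasure ((· - -θ) ⁻¹' S) = gaussMeasure ((· - θ) ⁻¹' S) := by
    rw [← Measure.measure_neg]
    congr 1 with x
    simp only [Set.mem_preimage, Set.mem_neg, sub_neg_eq_add]
    rw [neg_add_eq_sub]
    exact ⟨fun h => by simpa using hS_neg _ h, fun h => by simpa using hS_neg _ h⟩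
  have h_cosh : 2 * gaussMeasure S ≤ ∫⁻ x in S, ENNReal.ofReal (exp (-⟪x, θ⟫)) ∂gaussMeasure +
      ∫⁻ x in S, ENNReal.ofReal (exp ⟪x, θ⟫) ∂gaussMeasure := by
    rw [← lintegral_add_left (by fun_prop), ← setLIntegral_const]
    refine lintegral_mono fun x => ?_
    rw [← ENNReal.ofReal_add (exp_nonneg _) (exp_nonneg _), ← ENNReal.ofReal_ofNat]
    exact ENNReal.ofReal_le_ofReal
      (by linarith [add_one_le_exp (-⟪x, θ⟫), add_one_le_exp ⟪x, θ⟫])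
  have h_sum : c * (2 * gaussMeasure S) ≤ 2 * gaussMeasure ((· - θ) ⁻¹' S) := by
    calc c * (2 * gaussMeasure S) ≤ c * (∫⁻ x in S, ENNReal.ofReal (exp (-⟪x, θ⟫)) ∂gaussMeasure +
          ∫⁻ x in S, ENNReal.ofReal (exp ⟪x, θ⟫) ∂gaussMeasure) := by gcongr
      _ = gaussMeasure ((· - θ) ⁻¹' S) + gaussMeasure ((· - -θ) ⁻¹' S) := by
        simp only [mul_add, gaussMeasure_preimage_sub hS, norm_neg, inner_neg_right, neg_neg, c]
      _ = 2 * gaussMeasure ((· - θ) ⁻¹' S) := by rw [h_neg, two_mul]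
  rw [mul_left_comm] at h_sum
  simpa [c, measureReal_def, ENNReal.toReal_mul, exp_nonneg] using
    ENNReal.toReal_mono (by finiteness)
      ((ENNReal.mul_le_mul_iff_right two_ne_zero ENNReal.ofNat_ne_top).1 h_sum)

lemma lintegral_exp_inner_gaussMeasure (θ : E) :
    ∫⁻ x, ENNReal.ofReal (exp ⟪x, θ⟫) ∂gaussMeasure =
      ENNReal.ofReal (exp (‖θ‖ ^ 2 / 2)) * gaussMeasure (Set.univ : Set E) := by
  have h := gaussMeasure_preimage_sub (E := E) MeasurableSet.univ (-θ)
  simp only [Set.preimage_univ, Measure.restrict_univ, norm_neg, inner_neg_right, neg_neg] at h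
  rw [h, ← mul_assoc, ← ENNReal.ofReal_mul (exp_nonneg _), ← exp_add,
    show ‖θ‖ ^ 2 / 2 + -‖θ‖ ^ 2 / 2 = 0 by ring, exp_zero, ENNReal.ofReal_one, one_mul]

lemma gaussMeasure_real_le_inner_le {ρ : E} {M s : ℝ} (hM : 0 < M) (hρ : ‖ρ‖ ≤ M)
    (hs : 0 ≤ s) :
    gaussMeasure.real {x : E | s ≤ ⟪x, ρ⟫} ≤
      exp (-s ^ 2 / (2 * M ^ 2)) * gaussMeasure.real (Set.univ : Set E) := by
  set t := s / M ^ 2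
  have ht : 0 ≤ t := by positivity
  have h_markov : exp (t * s) * gaussMeasure.real {x : E | s ≤ ⟪x, ρ⟫} ≤
      exp (‖t • ρ‖ ^ 2 / 2) * gaussMeasure.real (Set.univ : Set E) := by
    have h : ENNReal.ofReal (exp (t * s)) * gaussMeasure {x : E | s ≤ ⟪x, ρ⟫} ≤
        ∫⁻ x, ENNReal.ofReal (exp ⟪x, t • ρ⟫) ∂gaussMeasure := by
      refine le_trans ?_ (mul_meas_ge_le_lintegral (by fun_prop) (ENNReal.ofReal (exp (t * s))))
      refine mul_le_mul_right (measure_mono fun x (hx : s ≤ ⟪x, ρ⟫) => ?_) _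
      rw [Set.mem_ofPred_eq, inner_smul_right]
      exact ENNReal.ofReal_le_ofReal (exp_le_exp.2 (mul_le_mul_of_nonneg_left hx ht))
    rw [lintegral_exp_inner_gaussMeasure] at h
    simpa [measureReal_def, ENNReal.toReal_mul, exp_nonneg] using
      ENNReal.toReal_mono (by finiteness) h
  have h_exp : exp (‖t • ρ‖ ^ 2 / 2) ≤ exp (t * s) * exp (-s ^ 2 / (2 * M ^ 2)) := by
    rw [← exp_add, exp_le_exp, norm_smul, Real.norm_of_nonneg ht]
    have h1 : (t * ‖ρ‖) ^ 2 ≤ (t * M) ^ 2 := by gcongr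
    have h2 : t * s + -s ^ 2 / (2 * M ^ 2) = (t * M) ^ 2 / 2 := by simp only [t]; field_simp; ring
    linarith
  refine le_of_mul_le_mul_left (h_markov.trans ?_) (exp_pos (t * s))
  rw [← mul_assoc]
  gcongr

lemma gaussMeasure_real_le_abs_inner_le {ρ : E} {M s : ℝ} (hM : 0 < M) (hρ : ‖ρ‖ ≤ M)
    (hs : 0 ≤ s) :
    gaussMeasure.real {x : E | s ≤ |⟪x, ρ⟫|} ≤
      2 * exp (-s ^ 2 / (2 * M ^ 2)) * gaussMeasure.real (Set.univ : Set E) := by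
  have h_sub : {x : E | s ≤ |⟪x, ρ⟫|} ⊆ {x | s ≤ ⟪x, ρ⟫} ∪ {x | s ≤ ⟪x, -ρ⟫} := fun x hx => by
    simp only [Set.mem_union, Set.mem_ofPred_eq, inner_neg_right] at hx ⊢
    exact (le_abs'.1 hx).symm.imp_right le_neg_of_le_neg
  calc gaussMeasure.real {x : E | s ≤ |⟪x, ρ⟫|}
      ≤ gaussMeasure.real {x : E | s ≤ ⟪x, ρ⟫} + gaussMeasure.real {x : E | s ≤ ⟪x, -ρ⟫} :=
        (measureReal_mono h_sub).trans (measureReal_union_le _ _)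
    _ ≤ _ := by
        linarith [gaussMeasure_real_le_inner_le hM hρ hs,
          gaussMeasure_real_le_inner_le hM (by rwa [norm_neg] : ‖-ρ‖ ≤ M) hs]

lemma gaussMeasure_real_univ_le_two_mul_slab {J : Type*} [Fintype J] [Nonempty J] (ρ : J → E)
    {M : ℝ} (hM : 0 < M) (hρ : ∀ j, ‖ρ j‖ ≤ M) :
    gaussMeasure.real (Set.univ : Set E) ≤
      2 * gaussMeasure.real (slab ρ (M * √(2 * log (4 * Fintype.card J)))) := by
  set N : ℝ := (Fintype.card J : ℝ)
  set s := M * √(2 * log (4 * N))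
  have hN : 1 ≤ N := by simp [N, Nat.one_le_iff_ne_zero, Fintype.card_ne_zero]
  have h_exp : exp (-s ^ 2 / (2 * M ^ 2)) = (4 * N)⁻¹ := by
    rw [mul_pow, sq_sqrt (mul_nonneg zero_le_two (log_nonneg (by linarith))),
      show -(M ^ 2 * (2 * log (4 * N))) / (2 * M ^ 2) = -log (4 * N) by field_simp,
      exp_neg, exp_log (by positivity)]
  have h_compl : gaussMeasure.real (slab ρ s)ᶜ ≤ gaussMeasure.real (Set.univ : Set E) / 2 := by
    have h_sub : (slab ρ s)ᶜ ⊆ ⋃ j, {x | s ≤ |⟪x, ρ j⟫|} := fun x hx => by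
      simpa using (by simpa [slab] using hx : ∃ j, s < |⟪x, ρ j⟫|).imp fun _ => le_of_lt
    calc _ ≤ ∑ j, gaussMeasure.real {x : E | s ≤ |⟪x, ρ j⟫|} :=
          (measureReal_mono h_sub).trans (measureReal_iUnion_fintype_le _)
      _ ≤ ∑ _j : J, 2 * (4 * N)⁻¹ * gaussMeasure.real (Set.univ : Set E) := by
          gcongr with j
          rw [← h_exp]
          exact gaussMeasure_real_le_abs_inner_le hM (hρ j) (by positivity)
      _ = _ := by simp only [Finset.sum_const, Finset.card_univ, nsmul_eq_mul]; field_simp; ring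
  have := measureReal_add_measureReal_compl (μ := (gaussMeasure : Measure E))
    (s := slab ρ s) (by simp only [slab]; measurability)
  linarith

theorem card_le_of_forall_exists_lt_abs_inner_sub_of_finiteDimensional {A J : Type*} [Fintype A]
    [Fintype J] [Nonempty J] (α : A → E) (ρ : J → E) {M₁ M₂ δ : ℝ} (hM₂ : 0 < M₂) (hδ : 0 < δ)
    (hα : ∀ p, ‖α p‖ ≤ M₁) (hρ : ∀ j, ‖ρ j‖ ≤ M₂)
    (hsep : ∀ p q, p ≠ q → ∃ j, δ < |⟪α p - α q, ρ j⟫|) :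
    (Fintype.card A : ℝ) ≤ 2 * (4 * Fintype.card J) ^ (4 * M₁ ^ 2 * M₂ ^ 2 / δ ^ 2) := by
  classical
  set N : ℝ := (Fintype.card J : ℝ)
  set s := M₂ * √(2 * log (4 * N))
  set lam := 2 * s / δ
  set Z := gaussMeasure.real (Set.univ : Set E)
  have hN : 1 ≤ N := by simp [N, Nat.one_le_iff_ne_zero, Fintype.card_ne_zero]
  have hZ : 0 < Z := ENNReal.toReal_pos gaussMeasure_univ_ne_zero (measure_ne_top _ _)
  have hlam : 0 < lam :=
    div_pos (mul_pos two_pos (mul_pos hM₂ (sqrt_pos.2 (mul_pos two_pos (log_pos (by linarith))))))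
      hδ
  have hC : MeasurableSet (slab ρ s) := by simp only [slab]; measurability
  have hC_neg : ∀ x ∈ slab ρ s, -x ∈ slab ρ s := fun x hx j => by simpa using hx j
  have h_translate : ∀ p, exp (-(lam * M₁) ^ 2 / 2) * (Z / 2) ≤
      gaussMeasure.real ((· - lam • α p) ⁻¹' slab ρ s) := fun p => by
    refine le_trans ?_ (exp_mul_gaussMeasure_real_le_preimage_sub hC hC_neg (lam • α p))
    gcongr
    · rw [norm_smul, Real.norm_of_nonneg hlam.le]
      exact mul_le_mul_of_nonneg_left (hα p) hlam.le
    · linarith [gaussMeasure_real_univ_le_two_mul_slab ρ hM₂ hρ]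
  have h_disj : Set.PairwiseDisjoint (Finset.univ : Finset A)
      fun p => (· - lam • α p) ⁻¹' slab ρ s := fun p _ q _ hpq => by
    refine disjoint_preimage_sub_slab ρ ((hsep p q hpq).imp fun j hj => ?_)
    rw [← smul_sub, real_inner_smul_left, abs_mul, abs_of_pos hlam]
    calc 2 * s = lam * δ := by simp only [lam]; field_simp
      _ < lam * |⟪α p - α q, ρ j⟫| := by gcongr
  have h_card : (Fintype.card A : ℝ) * (exp (-(lam * M₁) ^ 2 / 2) * (Z / 2)) ≤ Z := by
    calc _ = ∑ _p : A, exp (-(lam * M₁) ^ 2 / 2) * (Z / 2) := by simp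
      _ ≤ ∑ p : A, gaussMeasure.real ((· - lam • α p) ⁻¹' slab ρ s) :=
        Finset.sum_le_sum fun p _ => h_translate p
      _ ≤ Z := by
        rw [← measureReal_biUnion_finset h_disj fun p _ => hC.preimage (measurable_sub_const _)]
        exact measureReal_mono (Set.subset_univ _)
  have h_pow : exp ((lam * M₁) ^ 2 / 2) = (4 * N) ^ (4 * M₁ ^ 2 * M₂ ^ 2 / δ ^ 2) := by
    have hs2 : s ^ 2 = M₂ ^ 2 * (2 * log (4 * N)) := by
      rw [mul_pow, sq_sqrt (mul_nonneg zero_le_two (log_nonneg (by linarith)))]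
    rw [rpow_def_of_pos (by linarith),
      show (lam * M₁) ^ 2 / 2 = 2 * M₁ ^ 2 * s ^ 2 / δ ^ 2 by simp only [lam]; field_simp, hs2]
    ring_nf
  rw [neg_div, exp_neg] at h_card
  field_simp at h_card
  rwa [← h_pow, mul_pow]

end Gaussian

theorem card_le_of_forall_exists_lt_abs_inner_sub {E : Type*} [NormedAddCommGroup E]
    [InnerProductSpace ℝ E] {A J : Type*} [Fintype A] [Fintype J] [Nonempty J]
    (α : A → E) (ρ : J → E) {M₁ M₂ δ : ℝ} (hM₂ : 0 < M₂) (hδ : 0 < δ)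
    (hα : ∀ p, ‖α p‖ ≤ M₁) (hρ : ∀ j, ‖ρ j‖ ≤ M₂)
    (hsep : ∀ p q, p ≠ q → ∃ j, δ < |⟪α p - α q, ρ j⟫|) :
    (Fintype.card A : ℝ) ≤ 2 * (4 * Fintype.card J) ^ (4 * M₁ ^ 2 * M₂ ^ 2 / δ ^ 2) := by
  let K := Submodule.span ℝ (Set.range α ∪ Set.range ρ)
  have : FiniteDimensional ℝ K :=
    FiniteDimensional.span_of_finite ℝ ((Set.finite_range α).union (Set.finite_range ρ))
  let : MeasurableSpace K := borel K
  have : BorelSpace K := ⟨rfl⟩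
  exact card_le_of_forall_exists_lt_abs_inner_sub_of_finiteDimensional
    (fun p => (⟨α p, Submodule.subset_span (.inl ⟨p, rfl⟩)⟩ : K))
    (fun j => (⟨ρ j, Submodule.subset_span (.inr ⟨j, rfl⟩)⟩ : K)) hM₂ hδ hα hρ hsep

section L2

variable {X : Type*} (μ : PMF X)

def sqrtWeight (f : X → ℝ) : X → ℝ := fun x => √(μ x).toReal * f x

def MemL2 (f : X → ℝ) : Prop := Memℓp (sqrtWeight μ f) 2

def toL2 (f : X → ℝ) (hf : MemL2 μ f) : lp (fun _ : X => ℝ) 2 := ⟨sqrtWeight μ f, hf⟩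

variable {μ} {f g h : X → ℝ}

lemma summable_toReal_mul (h0 : ∀ x, 0 ≤ h x) {c : ℝ} (hc : ∀ x, h x ≤ c) :
    Summable fun x => (μ x).toReal * h x :=
  .of_nonneg_of_le (fun x => mul_nonneg ENNReal.toReal_nonneg (h0 x))
    (fun x => mul_le_mul_of_nonneg_left (hc x) ENNReal.toReal_nonneg)
    ((ENNReal.summable_toReal (μ.tsum_coe ▸ ENNReal.one_ne_top)).mul_right c)

lemma pexp_le (h0 : ∀ x, 0 ≤ h x) {c : ℝ} (hc : ∀ x, h x ≤ c) : pexp μ h ≤ c := by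
  have h_one : ∑' x, (μ x).toReal = 1 := by
    rw [← ENNReal.tsum_toReal_eq μ.apply_ne_top, μ.tsum_coe, ENNReal.toReal_one]
  calc pexp μ h ≤ ∑' x, (μ x).toReal * c :=
        (summable_toReal_mul h0 hc).tsum_le_tsum
          (fun x => mul_le_mul_of_nonneg_left (hc x) ENNReal.toReal_nonneg)
          (summable_toReal_mul (h := fun _ => c) (fun x => (h0 x).trans (hc x)) fun _ => le_rfl)
    _ = c := by rw [tsum_mul_right, h_one, one_mul]

lemma sq_sqrtWeight (f : X → ℝ) (x : X) : sqrtWeight μ f x ^ 2 = (μ x).toReal * f x ^ 2 := by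
  rw [sqrtWeight, mul_pow, sq_sqrt ENNReal.toReal_nonneg]

lemma memL2_of_abs_le {B : ℝ} (hf : ∀ x, |f x| ≤ B) : MemL2 μ f := by
  refine memℓp_gen ?_
  simp only [ENNReal.toReal_ofNat, rpow_two, Real.norm_eq_abs, sq_abs, sq_sqrtWeight]
  exact summable_toReal_mul (fun x => sq_nonneg _)
    fun x => sq_le_sq.2 ((hf x).trans (le_abs_self B))

lemma MemL2.sub (hf : MemL2 μ f) (hg : MemL2 μ g) : MemL2 μ (f - g) := by
  have : sqrtWeight μ (f - g) = sqrtWeight μ f - sqrtWeight μ g := by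
    ext x; simp [sqrtWeight, mul_sub]
  unfold MemL2
  rw [this]
  exact Memℓp.sub hf hg

lemma toL2_sub (hf : MemL2 μ f) (hg : MemL2 μ g) :
    toL2 μ (f - g) (hf.sub hg) = toL2 μ f hf - toL2 μ g hg := by
  ext x
  simp only [toL2, lp.coeFn_sub, Pi.sub_apply, sqrtWeight, mul_sub]

lemma inner_toL2 (hf : MemL2 μ f) (hg : MemL2 μ g) :
    ⟪toL2 μ f hf, toL2 μ g hg⟫ = inn μ f g := by
  rw [lp.inner_eq_tsum, inn, pexp]
  refine tsum_congr fun x => ?_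
  simp only [toL2, sqrtWeight]
  rw [real_inner_comm, inner_apply]
  linear_combination (f x * g x) * mul_self_sqrt (ENNReal.toReal_nonneg (a := μ x))

lemma norm_toL2_le {B : ℝ} (hf : ∀ x, |f x| ≤ B) : ‖toL2 μ f (memL2_of_abs_le hf)‖ ≤ B := by
  have hB : 0 ≤ B := (abs_nonneg _).trans (hf μ.support_nonempty.some)
  refine lp.norm_le_of_tsum_le (by norm_num) hB ?_
  simp only [ENNReal.toReal_ofNat, rpow_two, Real.norm_eq_abs, sq_abs, toL2, sq_sqrtWeight]
  exact pexp_le (fun x => sq_nonneg (f x)) fun x => sq_le_sq.2 ((hf x).trans (le_abs_self B))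

end L2

section DualNorm

variable {X : Type*} {μ : PMF X} {F G : Set (X → ℝ)} {f g : X → ℝ}

lemma abs_inn_le {A B : ℝ} (hf : ∀ x, |f x| ≤ A) (hg : ∀ x, |g x| ≤ B) :
    |inn μ f g| ≤ A * B := by
  rw [← inner_toL2 (memL2_of_abs_le hf) (memL2_of_abs_le hg)]
  exact (abs_real_inner_le_norm _ _).trans (mul_le_mul (norm_toL2_le hf) (norm_toL2_le hg)
    (norm_nonneg _) ((norm_nonneg _).trans (norm_toL2_le (μ := μ) hf)))

lemma abs_inn_le_dnorm (hf : MemL2 μ f) {B : ℝ} (hF : ∀ g ∈ F, ∀ x, |g x| ≤ B) (hg : g ∈ F) :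
    |inn μ f g| ≤ dnorm μ F f := by
  refine le_csSup ⟨‖toL2 μ f hf‖ * B, ?_⟩ ⟨g, hg, rfl⟩
  rintro _ ⟨g, hg, rfl⟩
  dsimp only
  rw [← inner_toL2 hf (memL2_of_abs_le (hF g hg))]
  exact (abs_real_inner_le_norm _ _).trans
    (mul_le_mul_of_nonneg_left (norm_toL2_le (hF g hg)) (norm_nonneg _))

lemma dnorm_nonneg : 0 ≤ dnorm μ F f :=
  Real.sSup_nonneg (by rintro _ ⟨g, -, rfl⟩; exact abs_nonneg _)

lemma dnorm_le {c : ℝ} (hc : 0 ≤ c) (h : ∀ g ∈ F, |inn μ f g| ≤ c) : dnorm μ F f ≤ c :=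
  Real.sSup_le (by rintro _ ⟨g, hg, rfl⟩; exact h g hg) hc

lemma exists_lt_abs_inn_of_lt_dnorm {c : ℝ} (hc : 0 ≤ c) (h : c < dnorm μ F f) :
    ∃ g ∈ F, c < |inn μ f g| := by
  by_contra! h'
  exact h.not_ge (dnorm_le hc h')

lemma dnorm_neg : dnorm μ F (-f) = dnorm μ F f := by
  have : ∀ g, inn μ (-f) g = -inn μ f g := fun g => by
    simp only [inn, pexp, Pi.neg_apply, neg_mul, mul_neg, tsum_neg]
  simp only [dnorm, this, abs_neg]

end DualNorm

section Covering

variable {X : Type*} {μ : PMF X} {F G : Set (X → ℝ)} {ε : ℝ}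

lemma covN_le_encard {C : Set (X → ℝ)} (hC : IsCover μ F G ε C) : covN μ F G ε ≤ C.encard :=
  iInf₂_le C hC

lemma exists_isCover_card_eq_covN (h : covN μ F G ε ≠ ⊤) :
    ∃ C : Finset (X → ℝ), IsCover μ F G ε C ∧ (C.card : ℕ∞) = covN μ F G ε := by
  have h_ne : Nonempty {C // IsCover μ F G ε C} := by
    by_contra! h_empty
    exact h (by simp [covN, iInf_subtype', iInf_of_empty])
  obtain ⟨⟨C, hC⟩, hC_min⟩ := ciInf_mem fun C : {C // IsCover μ F G ε C} => C.1.encard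
  have h_eq : C.encard = covN μ F G ε := by rw [covN, iInf_subtype']; exact hC_min
  have hC_fin : C.Finite := Set.encard_ne_top_iff.1 (h_eq ▸ h)
  exact ⟨hC_fin.toFinset, by simpa using hC, by rw [← h_eq, hC_fin.encard_eq_coe_toFinset_card]⟩

lemma exists_isCover_card_le (hε : 0 ≤ ε) {B : ℝ}
    (hB : ∀ S : Finset (X → ℝ), ↑S ⊆ G →
      (S : Set (X → ℝ)).Pairwise (fun p q => ε < dnorm μ F (p - q)) → (S.card : ℝ) ≤ B) :
    ∃ C : Finset (X → ℝ), IsCover μ F G ε C ∧ (C.card : ℝ) ≤ B := by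
  classical
  let P : ℕ → Prop := fun n => ∃ S : Finset (X → ℝ), ↑S ⊆ G ∧
    (S : Set (X → ℝ)).Pairwise (fun p q => ε < dnorm μ F (p - q)) ∧ S.card = n
  have hP : ∀ n, P n → n ≤ ⌊B⌋₊ := by
    rintro _ ⟨S, hSG, hS, rfl⟩
    exact Nat.le_floor (hB S hSG hS)
  obtain ⟨S, hSG, hS, hS_card⟩ : P (Nat.findGreatest P ⌊B⌋₊) :=
    Nat.findGreatest_spec (Nat.zero_le _) ⟨∅, by simp, by simp, rfl⟩
  refine ⟨S, ⟨hSG, fun f hf => ?_⟩, hB S hSG hS⟩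
  by_contra! h_far
  have hfS : f ∉ S := fun hfS => (h_far f hfS).not_ge
    (dnorm_le hε fun g _ => by simpa [inn, pexp] using hε)
  have h_ins : P (S.card + 1) := by
    refine ⟨insert f S, ?_, ?_, Finset.card_insert_of_notMem hfS⟩
    · simpa [Set.insert_subset_iff] using ⟨hf, hSG⟩
    · rw [Finset.coe_insert]
      refine hS.insert fun s hs _ => ⟨h_far s hs, ?_⟩
      rw [← neg_sub, dnorm_neg]
      exact h_far s hs
  have := Nat.le_findGreatest (hP _ h_ins) h_ins
  omega

lemma covN_ne_top_and_elog2_le (hε : 0 ≤ ε) {B : ℝ} (hB₁ : 1 ≤ B)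
    (hB : ∀ S : Finset (X → ℝ), ↑S ⊆ G →
      (S : Set (X → ℝ)).Pairwise (fun p q => ε < dnorm μ F (p - q)) → (S.card : ℝ) ≤ B) :
    covN μ F G ε ≠ ⊤ ∧ elog2 (covN μ F G ε) ≤ logb 2 B := by
  obtain ⟨C, hC, hC_card⟩ := exists_isCover_card_le hε hB
  have h : covN μ F G ε ≤ C.card := by simpa using covN_le_encard hC
  refine ⟨ne_top_of_le_ne_top (ENat.natCast_ne_top _) h, ?_⟩
  have h_nat : ((covN μ F G ε).toNat : ℝ) ≤ B :=
    le_trans (by exact_mod_cast ENat.toNat_le_of_le_natCast h) hC_card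
  rcases (Nat.cast_nonneg (α := ℝ) (covN μ F G ε).toNat).eq_or_lt with h0 | h0
  · rw [elog2, ← h0, logb_zero]
    exact logb_nonneg one_lt_two hB₁
  · exact logb_le_logb_of_le one_lt_two h0 h_nat

end Covering

lemma logb_two_mul_rpow {N : ℝ} (hN : 0 < N) (a : ℝ) :
    logb 2 (2 * (4 * N) ^ a) = 1 + a * (2 + logb 2 N) := by
  rw [logb_mul two_ne_zero (by positivity), logb_self_eq_one one_lt_two,
    logb_rpow_eq_mul_logb_of_pos (by positivity), logb_mul four_ne_zero hN.ne',
    show (4 : ℝ) = 2 ^ (2 : ℝ) by norm_num, logb_rpow two_pos (by norm_num)]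

section Duality

variable {X : Type*} {μ : PMF X} {F₁ F₂ : Set (X → ℝ)} {M₁ M₂ ε : ℝ}

theorem card_le_of_isCover_of_pairwise_lt_dnorm {η : ℝ} (hM₂ : 0 < M₂) (hηε : 2 * η < ε)
    (hB₁ : ∀ f ∈ F₁, ∀ x, |f x| ≤ M₁) (hB₂ : ∀ g ∈ F₂, ∀ x, |g x| ≤ M₂) (hF₂ : F₂.Nonempty)
    {G : Finset (X → ℝ)} (hG : IsCover μ F₁ F₂ η G) {S : Finset (X → ℝ)} (hS : ↑S ⊆ F₁)
    (hS_sep : (S : Set (X → ℝ)).Pairwise fun p q => ε < dnorm μ F₂ (p - q)) :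
    (S.card : ℝ) ≤ 2 * (4 * G.card) ^ (4 * M₁ ^ 2 * M₂ ^ 2 / (ε - 2 * η) ^ 2) := by
  obtain ⟨g₀, hg₀⟩ := hF₂
  obtain ⟨c₀, hc₀, hc₀_le⟩ := hG.2 g₀ hg₀
  have hη : 0 ≤ η := dnorm_nonneg.trans hc₀_le
  have : Nonempty G := ⟨⟨c₀, hc₀⟩⟩
  have hm₁ : ∀ f ∈ F₁, MemL2 μ f := fun f hf => memL2_of_abs_le (hB₁ f hf)
  have hm₂ : ∀ g ∈ F₂, MemL2 μ g := fun g hg => memL2_of_abs_le (hB₂ g hg)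
  let α : S → lp (fun _ : X => ℝ) 2 := fun p => toL2 μ p (hm₁ p (hS p.2))
  let ρ : G → lp (fun _ : X => ℝ) 2 := fun g => toL2 μ g (hm₂ g (hG.1 g.2))
  suffices ∀ p q, p ≠ q → ∃ j, ε - 2 * η < |⟪α p - α q, ρ j⟫| by
    simpa using card_le_of_forall_exists_lt_abs_inner_sub α ρ hM₂ (by linarith)
      (fun p => norm_toL2_le (hB₁ p (hS p.2))) (fun g => norm_toL2_le (hB₂ g (hG.1 g.2))) this
  intro p q hpq
  obtain ⟨g', hg', h_far⟩ := exists_lt_abs_inn_of_lt_dnorm (by linarith)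
    (hS_sep p.2 q.2 (Subtype.coe_ne_coe.2 hpq))
  obtain ⟨g, hg, h_close⟩ := hG.2 g' hg'
  have hp₁ := hm₁ _ (hS p.2)
  have hq₁ := hm₁ _ (hS q.2)
  have hg'₂ := hm₂ g' hg'
  have hg₂ := hm₂ g (hG.1 hg)
  have hp := (abs_inn_le_dnorm (hg'₂.sub hg₂) hB₁ (hS p.2)).trans h_close
  have hq := (abs_inn_le_dnorm (hg'₂.sub hg₂) hB₁ (hS q.2)).trans h_close
  rw [← inner_toL2 (hp₁.sub hq₁) hg'₂, toL2_sub hp₁ hq₁] at h_far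
  rw [← inner_toL2 (hg'₂.sub hg₂) hp₁, toL2_sub hg'₂ hg₂] at hp
  rw [← inner_toL2 (hg'₂.sub hg₂) hq₁, toL2_sub hg'₂ hg₂] at hq
  refine ⟨⟨g, hg⟩, ?_⟩
  set u := toL2 μ g' (hm₂ g' hg')
  set v := ρ ⟨g, hg⟩
  have h_split : ⟪α p - α q, u⟫ = ⟪α p - α q, v⟫ + ⟪u - v, α p⟫ - ⟪u - v, α q⟫ := by
    simp only [inner_sub_left, real_inner_comm]; ring
  rw [h_split] at h_far
  linarith [abs_sub (⟪α p - α q, v⟫ + ⟪u - v, α p⟫) ⟪u - v, α q⟫,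
    abs_add_le ⟪α p - α q, v⟫ ⟪u - v, α p⟫]

theorem card_le_one_of_pairwise_lt_dnorm (hε : 0 ≤ ε) (hM : 2 * (M₁ * M₂) ≤ ε)
    (hB₁ : ∀ f ∈ F₁, ∀ x, |f x| ≤ M₁) (hB₂ : ∀ g ∈ F₂, ∀ x, |g x| ≤ M₂)
    {S : Finset (X → ℝ)} (hS : ↑S ⊆ F₁)
    (hS_sep : (S : Set (X → ℝ)).Pairwise fun p q => ε < dnorm μ F₂ (p - q)) : S.card ≤ 1 := by
  refine Finset.card_le_one.2 fun p hp q hq => ?_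
  by_contra hpq
  have h_diff : ∀ x, |(p - q) x| ≤ M₁ + M₁ := fun x =>
    (abs_sub _ _).trans (add_le_add (hB₁ p (hS hp) x) (hB₁ q (hS hq) x))
  refine (hS_sep hp hq hpq).not_ge (dnorm_le hε fun g hg => ?_)
  exact (abs_inn_le h_diff (hB₂ g hg)).trans (by linarith)

end Duality

end OI

/-- a variant of metric entropy duality: there is an absolute constant `c ≥ 1`
such that `log N_{μ,F₂}(F₁,ε) ≤ c (M₁M₂/ε)² (1 + log N_{μ,F₁}(F₂,ε/8))` for all nonempty
`F₁ ⊆ [−M₁,M₁]^X` and `F₂ ⊆ [−M₂,M₂]^X`. -/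
theorem statement_5 :
    ∃ c : ℝ, 1 ≤ c ∧
      ∀ (X : Type) (_ : Nonempty X) (μ : PMF X) (M₁ M₂ : ℝ), 0 < M₁ → 0 < M₂ →
        ∀ F₁ F₂ : Set (X → ℝ), F₁.Nonempty → F₂.Nonempty →
          (∀ f ∈ F₁, ∀ x, |f x| ≤ M₁) → (∀ f ∈ F₂, ∀ x, |f x| ≤ M₂) →
          ∀ ε : ℝ, 0 < ε →
            covN μ F₁ F₂ (ε / 8) ≠ ⊤ →
              covN μ F₂ F₁ ε ≠ ⊤ ∧
                elog2 (covN μ F₂ F₁ ε) ≤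
                  c * (M₁ * M₂ / ε) ^ 2 * (1 + elog2 (covN μ F₁ F₂ (ε / 8))) := by
  refine ⟨20, by norm_num, fun X _ μ M₁ M₂ hM₁ hM₂ F₁ F₂ _ hF₂ hB₁ hB₂ ε hε hfin => ?_⟩
  obtain ⟨G, hG, hG_card⟩ := exists_isCover_card_eq_covN hfin
  have hG₁ : (1 : ℝ) ≤ G.card := by
    obtain ⟨g, hg⟩ := hF₂
    obtain ⟨c, hc, -⟩ := hG.2 g hg
    exact_mod_cast Finset.card_pos.2 ⟨c, hc⟩
  have hL : 0 ≤ logb 2 G.card := logb_nonneg one_lt_two hG₁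
  rw [show elog2 (covN μ F₁ F₂ (ε / 8)) = logb 2 G.card by simp [elog2, ← hG_card]]
  rcases le_or_gt (2 * (M₁ * M₂)) ε with h_large | h_small
  · refine (covN_ne_top_and_elog2_le (B := 1) hε.le le_rfl fun S hS hS_sep => ?_).imp_right
      fun h => h.trans (by rw [logb_one]; positivity)
    exact_mod_cast card_le_one_of_pairwise_lt_dnorm hε.le h_large hB₁ hB₂ hS hS_sep
  · set T := M₁ * M₂ / ε
    have hT : 1 < 4 * T ^ 2 := by
      have : 1 / 2 < T := by rw [lt_div_iff₀ hε]; linarith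
      nlinarith
    have h_exp : 4 * M₁ ^ 2 * M₂ ^ 2 / (ε - 2 * (ε / 8)) ^ 2 = 64 / 9 * T ^ 2 := by
      simp only [T]; field_simp; ring
    have h_pow : 1 ≤ (4 * (G.card : ℝ)) ^ (64 / 9 * T ^ 2) :=
      one_le_rpow (by linarith) (by positivity)
    refine (covN_ne_top_and_elog2_le hε.le (by linarith) fun S hS hS_sep => h_exp ▸
      card_le_of_isCover_of_pairwise_lt_dnorm hM₂ (by linarith) hB₁ hB₂ hF₂ hG hS hS_sep).imp_right
      fun h => h.trans ?_
    rw [logb_two_mul_rpow (by positivity)]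
    nlinarith [mul_nonneg (sq_nonneg T) hL]
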